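/- Truncation estimate and invertibility (abstract form of the finite-data approximation lemma): Let V = {(n,i) : n ∈ ℕ, n ≥ 1, i ∈ {0,1}}, let ξ : ℕ → [0,∞) satisfy Σ_{k≥1} ξ_k² < ∞, and let A : V × V → ℂ satisfy |A_{(n,i),(k,j)}| ≤ ξ_k/(|n − k| + 1). For K ≥ 1 define the truncated matrix A^K by A^K_{(n,i),(k,j)} = A_{(n,i),(k,j)} if k ≤ K and A^K_{(n,i),(k,j)} = 0 if k > K. Then, with the associated operators on ℓ^∞(V;ℂ): (i) there is an absolute constant C > 0 such that ‖A − A^K‖ ≤ C (Σ_{k>K} ξ_k²)^{1/2} for all K, so ‖A − A^K‖ → 0 as K → ∞; (ii) if the operator I + A has a bounded inverse on ℓ^∞(V;ℂ), then there exists K₀ such that for every K ≥ K₀ the operator I + A^K has a bounded inverse on ℓ^∞(V;ℂ). -/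

import Mathlib

open Filter Topology

/-- The index set `V = {(n, i) : n ≥ 1, i ∈ {0, 1}}` (here `n : ℕ` stands for the
paper's index `n + 1`). -/
abbrev SeqIdx := ℕ × Fin 2

/-!
A kernel whose rows have uniformly bounded `ℓ¹` norms acts boundedly on `ℓ^∞`, with operator
norm at most that bound. In `A - A^K` only the columns `k ≥ K` survive, two for each `k`, so by
Cauchy–Schwarz every row has `ℓ¹` norm at most `2 Z^{1/2} (Σ_{k ≥ K} ξ_k²)^{1/2}`, where
`Z = Σ_{z ∈ ℤ} (|z| + 1)⁻²` bounds `Σ_k (|n - k| + 1)⁻²` uniformly in `n`. The tail sums tend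
to `0`, so `I + A^K → I + A` in norm, and the units of the Banach algebra of bounded operators
form an open set.
-/
section KernelOperator

variable {𝕜 ι κ : Type*} [NontriviallyNormedField 𝕜]

def RowSumBounded (B : ι → κ → 𝕜) (M : ℝ) : Prop :=
  ∀ i, Summable (fun j => ‖B i j‖) ∧ ∑' j, ‖B i j‖ ≤ M

lemma norm_mul_lp_top_apply_le (b : 𝕜) (f : lp (fun _ : κ => 𝕜) ⊤) (j : κ) :
    ‖b * f j‖ ≤ ‖b‖ * ‖f‖ := by
  rw [norm_mul]
  exact mul_le_mul_of_nonneg_left (lp.norm_apply_le_norm ENNReal.top_ne_zero f j) (norm_nonneg _)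

variable {B : ι → κ → 𝕜} {M : ℝ}

lemma RowSumBounded.summable_mul (hB : RowSumBounded B M) (f : lp (fun _ : κ => 𝕜) ⊤) (i : ι) :
    Summable fun j => ‖B i j * f j‖ :=
  ((hB i).1.mul_right ‖f‖).of_nonneg_of_le (fun _ => norm_nonneg _) fun j =>
    norm_mul_lp_top_apply_le _ f j

lemma RowSumBounded.norm_tsum_mul_le (hB : RowSumBounded B M) (f : lp (fun _ : κ => 𝕜) ⊤)
    (i : ι) : ‖∑' j, B i j * f j‖ ≤ M * ‖f‖ :=
  calc ‖∑' j, B i j * f j‖ ≤ ∑' j, ‖B i j * f j‖ := norm_tsum_le_tsum_norm (hB.summable_mul f i)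
    _ ≤ ∑' j, ‖B i j‖ * ‖f‖ := (hB.summable_mul f i).tsum_le_tsum
        (fun j => norm_mul_lp_top_apply_le _ f j) ((hB i).1.mul_right ‖f‖)
    _ = (∑' j, ‖B i j‖) * ‖f‖ := tsum_mul_right
    _ ≤ M * ‖f‖ := mul_le_mul_of_nonneg_right (hB i).2 (norm_nonneg f)

lemma RowSumBounded.exists_clm [CompleteSpace 𝕜] (hB : RowSumBounded B M) (hM : 0 ≤ M) :
    ∃ T : lp (fun _ : κ => 𝕜) ⊤ →L[𝕜] lp (fun _ : ι => 𝕜) ⊤,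
      ∀ f i, T f i = ∑' j, B i j * f j := by
  have hmem (f : lp (fun _ : κ => 𝕜) ⊤) : Memℓp (fun i => ∑' j, B i j * f j) ⊤ :=
    memℓp_infty ⟨M * ‖f‖, by rintro _ ⟨i, rfl⟩; exact hB.norm_tsum_mul_le f i⟩
  let L : lp (fun _ : κ => 𝕜) ⊤ →ₗ[𝕜] lp (fun _ : ι => 𝕜) ⊤ :=
    { toFun f := ⟨_, hmem f⟩
      map_add' f g := by
        ext i
        simp only [lp.coeFn_add, Pi.add_apply, mul_add]
        exact ((hB.summable_mul f i).of_norm.tsum_add (hB.summable_mul g i).of_norm)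
      map_smul' c f := by
        ext i
        simp only [lp.coeFn_smul, Pi.smul_apply, smul_eq_mul, RingHom.id_apply, mul_left_comm _ c]
        exact tsum_mul_left }
  exact ⟨L.mkContinuous M fun f => lp.norm_le_of_forall_le (mul_nonneg hM (norm_nonneg f))
    (hB.norm_tsum_mul_le f), fun _ _ => rfl⟩

lemma RowSumBounded.opNorm_le (hB : RowSumBounded B M) (hM : 0 ≤ M)
    {T : lp (fun _ : κ => 𝕜) ⊤ →L[𝕜] lp (fun _ : ι => 𝕜) ⊤}
    (hT : ∀ f i, T f i = ∑' j, B i j * f j) : ‖T‖ ≤ M :=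
  T.opNorm_le_bound hM fun f => lp.norm_le_of_forall_le (mul_nonneg hM (norm_nonneg f)) fun i => by
    rw [hT]; exact hB.norm_tsum_mul_le f i

lemma RowSumBounded.sub_apply_eq_tsum [CompleteSpace 𝕜] {B' : ι → κ → 𝕜} {M' : ℝ} (hB : RowSumBounded B M)
    (hB' : RowSumBounded B' M') {T T' : lp (fun _ : κ => 𝕜) ⊤ →L[𝕜] lp (fun _ : ι => 𝕜) ⊤}
    (hT : ∀ f i, T f i = ∑' j, B i j * f j) (hT' : ∀ f i, T' f i = ∑' j, B' i j * f j)
    (f : lp (fun _ : κ => 𝕜) ⊤) (i : ι) : (T - T') f i = ∑' j, (B - B') i j * f j := by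
  rw [_root_.sub_apply, lp.coeFn_sub, Pi.sub_apply, hT, hT',
    ← (hB.summable_mul f i).of_norm.tsum_sub (hB'.summable_mul f i).of_norm]
  simp only [Pi.sub_apply, sub_mul]

end KernelOperator

lemma Real.summable_mul_of_summable_sq {ι : Type*} {a b : ι → ℝ} (ha : Summable fun k => a k ^ 2)
    (hb : Summable fun k => b k ^ 2) : Summable fun k => a k * b k :=
  .of_norm_bounded ((ha.add hb).div_const 2) fun k => by
    rw [Real.norm_eq_abs, abs_mul]
    nlinarith [sq_nonneg (|a k| - |b k|), sq_abs (a k), sq_abs (b k)]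

lemma Real.tsum_mul_le_sqrt_mul_sqrt {ι : Type*} {a b : ι → ℝ} (ha : Summable fun k => a k ^ 2)
    (hb : Summable fun k => b k ^ 2) :
    ∑' k, a k * b k ≤ √(∑' k, a k ^ 2) * √(∑' k, b k ^ 2) :=
  tsum_le_of_sum_le' (by positivity) fun s =>
    (Real.sum_mul_le_sqrt_mul_sqrt s a b).trans <| by
      gcongr
      exacts [ha.sum_le_tsum s fun k _ => sq_nonneg _, hb.sum_le_tsum s fun k _ => sq_nonneg _]

lemma HasSum.comp_fst_of_fintype {α ι : Type*} [Fintype ι] {F : α → ℝ} {s : ℝ} (hF : HasSum F s)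
    (hF0 : 0 ≤ F) : HasSum (fun w : α × ι => F w.1) (Fintype.card ι * s) := by
  have hnorm : Summable fun k => ‖F k‖ := by
    simpa only [Real.norm_eq_abs, abs_of_nonneg (hF0 _)] using hF.summable
  have h := hF.mul (hasSum_fintype fun _ : ι => (1 : ℝ))
    (summable_mul_of_summable_norm (f := F) (g := fun _ => 1) hnorm .of_finite)
  simp only [mul_one, Finset.sum_const, Finset.card_univ, nsmul_eq_mul] at h
  rwa [mul_comm] at h

lemma summable_one_div_abs_add_one_sq : Summable fun z : ℤ => 1 / (|(z : ℝ)| + 1) ^ 2 := by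
  have h : Summable fun m : ℕ => 1 / ((m : ℝ) + 1) ^ 2 := by
    simpa using (summable_nat_add_iff 1).mpr (Real.summable_one_div_nat_pow.mpr one_lt_two)
  exact .of_nat_of_neg (by simpa using h) (by simpa using h)

noncomputable def invSqDecaySum : ℝ := ∑' z : ℤ, 1 / (|(z : ℝ)| + 1) ^ 2

lemma summable_one_div_abs_sub_add_one_sq_and_tsum_le (n : ℕ) :
    Summable (fun k : ℕ => (1 / (|(n : ℝ) - k| + 1)) ^ 2) ∧
      ∑' k : ℕ, (1 / (|(n : ℝ) - k| + 1)) ^ 2 ≤ invSqDecaySum := by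
  have hinj : Function.Injective fun k : ℕ => (k : ℤ) - n := fun a b h => by simpa using h
  have heq : (fun k : ℕ => (1 / (|(n : ℝ) - k| + 1)) ^ 2) =
      (fun z : ℤ => 1 / (|(z : ℝ)| + 1) ^ 2) ∘ fun k : ℕ => (k : ℤ) - n := by
    ext k; simp [abs_sub_comm]
  have hsum := summable_one_div_abs_add_one_sq.comp_injective hinj
  rw [heq]
  exact ⟨hsum, hsum.tsum_le_tsum_of_inj _ hinj (fun _ _ => by positivity) (fun _ => le_rfl)
    summable_one_div_abs_add_one_sq⟩

lemma invSqDecaySum_pos : 0 < invSqDecaySum :=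
  summable_one_div_abs_add_one_sq.tsum_pos (fun _ => by positivity) 0 (by norm_num)

lemma summable_and_tsum_le_of_le_div_abs_sub_add_one {ι : Type*} [Fintype ι] {n : ℕ}
    {a : ℕ → ℝ} (ha : 0 ≤ a) (ha2 : Summable fun k => a k ^ 2) {g : ℕ × ι → ℝ} (hg : 0 ≤ g)
    (hga : ∀ w, g w ≤ a w.1 / (|(n : ℝ) - w.1| + 1)) :
    Summable g ∧ ∑' w, g w ≤ Fintype.card ι * √invSqDecaySum * √(∑' k, a k ^ 2) := by
  set b : ℕ → ℝ := fun k => 1 / (|(n : ℝ) - k| + 1)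
  obtain ⟨hb2, hb2_le⟩ := summable_one_div_abs_sub_add_one_sq_and_tsum_le n
  have hF := Real.summable_mul_of_summable_sq ha2 hb2
  have hF_le : ∑' k, a k * b k ≤ √(∑' k, a k ^ 2) * √invSqDecaySum :=
    (Real.tsum_mul_le_sqrt_mul_sqrt ha2 hb2).trans (by gcongr)
  have hG := hF.hasSum.comp_fst_of_fintype (ι := ι) fun k => mul_nonneg (ha k) (by positivity)
  have hgG : ∀ w, g w ≤ a w.1 * b w.1 := fun w => (hga w).trans_eq (div_eq_mul_one_div _ _)
  have hg_sum : Summable g := hG.summable.of_nonneg_of_le hg hgG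
  refine ⟨hg_sum, ?_⟩
  calc ∑' w, g w ≤ Fintype.card ι * ∑' k, a k * b k := hasSum_le hgG hg_sum.hasSum hG
    _ ≤ _ := by rw [mul_assoc, mul_comm √invSqDecaySum]; gcongr

lemma rowSumBounded_of_norm_le_div_abs_sub_add_one {𝕜 ι ι' : Type*} [NontriviallyNormedField 𝕜]
    [Fintype ι] {B : ℕ × ι' → ℕ × ι → 𝕜} {a : ℕ → ℝ} (ha : 0 ≤ a)
    (ha2 : Summable fun k => a k ^ 2)
    (hB : ∀ v w, ‖B v w‖ ≤ a w.1 / (|(v.1 : ℝ) - w.1| + 1)) :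
    RowSumBounded B (Fintype.card ι * √invSqDecaySum * √(∑' k, a k ^ 2)) := fun v =>
  summable_and_tsum_le_of_le_div_abs_sub_add_one ha ha2 (fun _ => norm_nonneg _) (hB v)

def truncCols {α ι 𝕜 : Type*} [Zero 𝕜] (K : ℕ) (A : α → ℕ × ι → 𝕜) (v : α) (w : ℕ × ι) : 𝕜 :=
  if w.1 < K then A v w else 0

lemma rowSumBounded_truncCols {𝕜 ι ι' : Type*} [NontriviallyNormedField 𝕜] [Fintype ι]
    {ξ : ℕ → ℝ} {A : ℕ × ι' → ℕ × ι → 𝕜} (hξ : 0 ≤ ξ) (hξ2 : Summable fun k => ξ k ^ 2)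
    (hA : ∀ v w, ‖A v w‖ ≤ ξ w.1 / (|(v.1 : ℝ) - w.1| + 1)) (K : ℕ) :
    RowSumBounded (truncCols K A) (Fintype.card ι * √invSqDecaySum * √(∑' k, ξ k ^ 2)) :=
  rowSumBounded_of_norm_le_div_abs_sub_add_one hξ hξ2 fun v w => by
    unfold truncCols
    split_ifs
    exacts [hA v w, by rw [norm_zero]; exact div_nonneg (hξ w.1) (by positivity)]

lemma tsum_ite_le_eq_tsum_add {M : Type*} [AddCommMonoid M] [TopologicalSpace M] (f : ℕ → M)
    (K : ℕ) : ∑' k, (if K ≤ k then f k else 0) = ∑' j, f (j + K) := by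
  rw [← (add_left_injective K).tsum_eq]
  · simp
  · intro k hk
    exact ⟨k - K, Nat.sub_add_cancel (not_not.mp fun h => hk (if_neg h))⟩

lemma rowSumBounded_sub_truncCols {𝕜 ι ι' : Type*} [NontriviallyNormedField 𝕜] [Fintype ι]
    {ξ : ℕ → ℝ} {A : ℕ × ι' → ℕ × ι → 𝕜} (hξ : 0 ≤ ξ) (hξ2 : Summable fun k => ξ k ^ 2)
    (hA : ∀ v w, ‖A v w‖ ≤ ξ w.1 / (|(v.1 : ℝ) - w.1| + 1)) (K : ℕ) :
    RowSumBounded (A - truncCols K A)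
      (Fintype.card ι * √invSqDecaySum * √(∑' j, ξ (j + K) ^ 2)) := by
  set ξK : ℕ → ℝ := fun k => if K ≤ k then ξ k else 0
  have hξK : 0 ≤ ξK := fun k => by dsimp only [ξK]; split_ifs; exacts [hξ k, le_rfl]
  have hξK_le : ∀ k, ξK k ^ 2 ≤ ξ k ^ 2 := fun k => by
    by_cases h : K ≤ k <;> simp [ξK, h, sq_nonneg]
  have hsq : ∑' k, ξK k ^ 2 = ∑' j, ξ (j + K) ^ 2 := by
    simpa only [ξK, ite_pow, zero_pow two_ne_zero] using
      tsum_ite_le_eq_tsum_add (fun k => ξ k ^ 2) K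
  rw [← hsq]
  refine rowSumBounded_of_norm_le_div_abs_sub_add_one hξK
    (hξ2.of_nonneg_of_le (fun k => sq_nonneg _) hξK_le) fun v w => ?_
  by_cases h : K ≤ w.1
  · simpa [truncCols, ξK, h, not_lt.mpr h] using hA v w
  · simp [truncCols, ξK, h, not_le.mp h]

/-- **Truncation estimate and invertibility** (abstract form of Lemma 5.3): with
`|A_{(n,i),(k,j)}| ≤ ξ_k / (|n - k| + 1)`, `Σ ξ_k² < ∞`, and `A^K` the truncation of `A`
keeping the columns with `k < K` (paper's `k ≤ K`), the associated operators on
`ℓ^∞(V; ℂ)` satisfy `‖A - A^K‖ ≤ C (Σ_{k ≥ K} ξ_k²)^{1/2}` for an absolute constant `C`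
(hence `‖A - A^K‖ → 0`), and if `I + A` is boundedly invertible then so is `I + A^K` for
all sufficiently large `K`. -/
theorem truncation_estimate_and_invertibility :
    ∃ C : ℝ, 0 < C ∧
      ∀ (ξ : ℕ → ℝ) (A : SeqIdx → SeqIdx → ℂ),
        (∀ k, 0 ≤ ξ k) → Summable (fun k => ξ k ^ 2) →
        (∀ v w : SeqIdx, ‖A v w‖ ≤ ξ w.1 / (|(v.1 : ℝ) - (w.1 : ℝ)| + 1)) →
        ∃ T : lp (fun _ : SeqIdx => ℂ) ⊤ →L[ℂ] lp (fun _ : SeqIdx => ℂ) ⊤,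
        ∃ Tt : ℕ → (lp (fun _ : SeqIdx => ℂ) ⊤ →L[ℂ] lp (fun _ : SeqIdx => ℂ) ⊤),
          (∀ (f : lp (fun _ : SeqIdx => ℂ) ⊤) (v : SeqIdx),
            T f v = ∑' w : SeqIdx, A v w * f w) ∧
          (∀ (K : ℕ) (f : lp (fun _ : SeqIdx => ℂ) ⊤) (v : SeqIdx),
            Tt K f v = ∑' w : SeqIdx, (if w.1 < K then A v w else 0) * f w) ∧
          (∀ K : ℕ, ‖T - Tt K‖ ≤ C * Real.sqrt (∑' j : ℕ, ξ (j + K) ^ 2)) ∧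
          Tendsto (fun K : ℕ => ‖T - Tt K‖) atTop (𝓝 0) ∧
          (IsUnit (1 + T) → ∃ K₀ : ℕ, ∀ K : ℕ, K₀ ≤ K → IsUnit (1 + Tt K)) := by
  refine ⟨Fintype.card (Fin 2) * √invSqDecaySum, by simp [invSqDecaySum_pos],
    fun ξ A hξ hξ2 hA => ?_⟩
  have hA_row := rowSumBounded_of_norm_le_div_abs_sub_add_one hξ hξ2 hA
  obtain ⟨T, hT⟩ := hA_row.exists_clm (by positivity)
  choose Tt hTt using fun K => (rowSumBounded_truncCols hξ hξ2 hA K).exists_clm (by positivity)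
  have hnorm (K : ℕ) :
      ‖T - Tt K‖ ≤ Fintype.card (Fin 2) * √invSqDecaySum * √(∑' j, ξ (j + K) ^ 2) :=
    (rowSumBounded_sub_truncCols hξ hξ2 hA K).opNorm_le (by positivity)
      (hA_row.sub_apply_eq_tsum (rowSumBounded_truncCols hξ hξ2 hA K) hT (hTt K))
  have htend : Tendsto (fun K => ‖T - Tt K‖) atTop (𝓝 0) :=
    squeeze_zero (fun _ => norm_nonneg _) hnorm
      (by simpa using (tendsto_sum_nat_add fun k => ξ k ^ 2).sqrt.const_mul _)
  refine ⟨T, Tt, hT, hTt, hnorm, htend, fun hU => eventually_atTop.mp ?_⟩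
  have hconv : Tendsto (fun K => 1 + Tt K) atTop (𝓝 (1 + T)) :=
    (tendsto_iff_norm_sub_tendsto_zero.mpr (by simpa [norm_sub_rev] using htend)).const_add 1
  exact hconv.eventually (Units.isOpen.mem_nhds hU)
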